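/- Let ρ > 0 and T > 0. Then for every x_1 ∈ ℝ, ∫_ℝ f_2(x_1, x_2)^2 dx_2 ≤ 1/ρ, where the integral is with respect to Lebesgue measure. -/
import Mathlib


open Real MeasureTheory ENNReal

/-- The second chaos kernel of the quadratic functional of the Ornstein–Uhlenbeck Lévy
process. -/
noncomputable def ouKernel (ρ T x₁ x₂ : ℝ) : ℝ :=
  (if x₁ ≤ T then (1 : ℝ) else 0) * (if x₂ ≤ T then (1 : ℝ) else 0) *
    Real.exp (ρ * (x₁ + x₂)) *
    ((1 - Real.exp (-2 * ρ * T)) * (if max x₁ x₂ ≤ 0 then (1 : ℝ) else 0) +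
      (Real.exp (-2 * ρ * max x₁ x₂) - Real.exp (-2 * ρ * T)) *
        (if 0 < max x₁ x₂ then (1 : ℝ) else 0))

/-- `∫_ℝ f₂(x₁,x₂)² dx₂ ≤ 1/ρ` for every `x₁`. -/
theorem stmt_12 (ρ T : ℝ) (hρ : 0 < ρ) (hT : 0 < T) (x₁ : ℝ) :
    (∫⁻ x₂ : ℝ, ENNReal.ofReal ((ouKernel ρ T x₁ x₂) ^ 2)) ≤
      ENNReal.ofReal (1 / ρ) := by
  -- pointwise bound: 0 ≤ ouKernel ≤ exp (-ρ * |x₂ - x₁|)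
  have key : ∀ x₂ : ℝ, (ouKernel ρ T x₁ x₂) ^ 2 ≤ Real.exp (-(2 * ρ) * |x₂ - x₁|) := by
    intro x₂
    have habs : Real.exp (-(2 * ρ) * |x₂ - x₁|) = (Real.exp (-ρ * |x₂ - x₁|)) ^ 2 := by
      rw [← Real.exp_nat_mul]; ring_nf
    rw [habs]
    have hbound : 0 ≤ ouKernel ρ T x₁ x₂ ∧
        ouKernel ρ T x₁ x₂ ≤ Real.exp (-ρ * |x₂ - x₁|) := by
      unfold ouKernel
      by_cases h1 : x₁ ≤ T
      · by_cases h2 : x₂ ≤ T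
        · have hM : max x₁ x₂ ≤ T := max_le h1 h2
          have hid : ρ * (x₁ + x₂) + (-2 * ρ * max x₁ x₂) = -ρ * |x₂ - x₁| := by
            rcases le_total x₁ x₂ with h | h
            · rw [max_eq_right h, abs_of_nonneg (by linarith)]; ring
            · rw [max_eq_left h, abs_of_nonpos (by linarith)]; ring
          by_cases hm : max x₁ x₂ ≤ 0
          · simp only [if_pos h1, if_pos h2, if_pos hm, if_neg (not_lt.mpr hm),
              mul_one, mul_zero, add_zero, one_mul]
            have he1 : Real.exp (-2 * ρ * T) ≤ 1 := Real.exp_le_one_iff.mpr (by nlinarith)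
            constructor
            · exact mul_nonneg (Real.exp_pos _).le (by linarith)
            · calc Real.exp (ρ * (x₁ + x₂)) * (1 - Real.exp (-2 * ρ * T))
                  ≤ Real.exp (ρ * (x₁ + x₂)) * 1 := by
                    apply mul_le_mul_of_nonneg_left _ (Real.exp_pos _).le
                    have := Real.exp_pos (-2 * ρ * T); linarith
                _ = Real.exp (ρ * (x₁ + x₂)) := mul_one _
                _ ≤ Real.exp (ρ * (x₁ + x₂) + (-2 * ρ * max x₁ x₂)) := by
                    apply Real.exp_le_exp.mpr; nlinarith
                _ = Real.exp (-ρ * |x₂ - x₁|) := by rw [hid]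
          · push_neg at hm
            simp only [if_pos h1, if_pos h2, if_neg (not_le.mpr hm), if_pos hm,
              mul_one, mul_zero, zero_add, one_mul]
            have hle : Real.exp (-2 * ρ * T) ≤ Real.exp (-2 * ρ * max x₁ x₂) := by
              apply Real.exp_le_exp.mpr; nlinarith
            constructor
            · exact mul_nonneg (Real.exp_pos _).le (by linarith)
            · calc Real.exp (ρ * (x₁ + x₂)) *
                  (Real.exp (-2 * ρ * max x₁ x₂) - Real.exp (-2 * ρ * T))
                  ≤ Real.exp (ρ * (x₁ + x₂)) * Real.exp (-2 * ρ * max x₁ x₂) := by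
                    apply mul_le_mul_of_nonneg_left _ (Real.exp_pos _).le
                    have := Real.exp_pos (-2 * ρ * T); linarith
                _ = Real.exp (ρ * (x₁ + x₂) + (-2 * ρ * max x₁ x₂)) := by
                    rw [← Real.exp_add]
                _ = Real.exp (-ρ * |x₂ - x₁|) := by rw [hid]
        · simp [h2, Real.exp_nonneg]
      · simp [h1, Real.exp_nonneg]
    exact pow_le_pow_left₀ hbound.1 hbound.2 2
  -- integrability of exp (-(2ρ)|x|)
  have hone : Integrable (fun x : ℝ => Real.exp (-|x|)) := by
    have hIoi : IntegrableOn (fun x : ℝ => Real.exp (-|x|)) (Set.Ioi 0) := by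
      refine (exp_neg_integrableOn_Ioi 0 one_pos).congr_fun ?_ measurableSet_Ioi
      intro x hx
      simp only
      rw [abs_of_pos hx]
      congr 1
      ring
    have hIic : IntegrableOn (fun x : ℝ => Real.exp (-|x|)) (Set.Iic 0) := by
      refine (integrableOn_exp_Iic 0).congr_fun ?_ measurableSet_Iic
      intro x hx
      simp only
      rw [abs_of_nonpos (Set.mem_Iic.mp hx), neg_neg]
    have := hIic.union hIoi
    rwa [Set.Iic_union_Ioi, integrableOn_univ] at this
  have hInt : Integrable (fun x : ℝ => Real.exp (-(2 * ρ) * |x|)) := by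
    have h2ρ : (2 * ρ : ℝ) ≠ 0 := by positivity
    have := (integrable_comp_mul_left_iff (fun x : ℝ => Real.exp (-|x|)) h2ρ).mpr hone
    refine this.congr (Filter.Eventually.of_forall fun x => ?_)
    simp only
    rw [abs_mul, abs_of_pos (by positivity : (0:ℝ) < 2 * ρ)]
    congr 1
    ring
  calc (∫⁻ x₂ : ℝ, ENNReal.ofReal ((ouKernel ρ T x₁ x₂) ^ 2))
      ≤ ∫⁻ x₂ : ℝ, ENNReal.ofReal (Real.exp (-(2 * ρ) * |x₂ - x₁|)) :=
        lintegral_mono fun x₂ => ENNReal.ofReal_le_ofReal (key x₂)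
    _ = ∫⁻ x : ℝ, ENNReal.ofReal (Real.exp (-(2 * ρ) * |x|)) :=
        lintegral_sub_right_eq_self (fun x => ENNReal.ofReal (Real.exp (-(2 * ρ) * |x|))) x₁
    _ = ENNReal.ofReal (∫ x : ℝ, Real.exp (-(2 * ρ) * |x|)) := by
        rw [← ofReal_integral_eq_lintegral_ofReal hInt
          (Filter.Eventually.of_forall fun x => (Real.exp_pos _).le)]
    _ = ENNReal.ofReal (1 / ρ) := by
        congr 1
        calc (∫ x : ℝ, Real.exp (-(2 * ρ) * |x|))
            = ∫ x : ℝ, (fun y : ℝ => Real.exp (-y)) (|x| * (2 * ρ)) := by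
              congr 1; funext x; simp only; congr 1; ring
          _ = 2 * ∫ x in Set.Ioi (0:ℝ), (fun y : ℝ => Real.exp (-y)) (x * (2 * ρ)) :=
              integral_comp_abs (f := fun y : ℝ => Real.exp (-(y * (2 * ρ))))
          _ = 2 * ((2 * ρ)⁻¹ • ∫ x in Set.Ioi ((0:ℝ) * (2 * ρ)), Real.exp (-x)) := by
              rw [integral_comp_mul_right_Ioi (fun y : ℝ => Real.exp (-y)) 0
                (by positivity : (0:ℝ) < 2 * ρ)]
          _ = 1 / ρ := by
              rw [zero_mul, integral_exp_neg_Ioi_zero, smul_eq_mul, mul_one]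
              field_simp
              try ring
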